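/- For each choice of sign σ ∈ {+, −}: |b − (c^{3/4}/√2) · |m^σ|^{1/4}| ≤ (c²/(2√2))(M' + (c/4) M''), where b = √a. -/

import Mathlib

/-!
Write `a = (1/π) ∫ √(c² - x²) (1 + V x) dx`. Freezing `V` at an endpoint `e = ±c` gives the
semicircle value `(1 + V e) c² / 2`, and the error is controlled by the mean value theorem,
`|V x - V e| ≤ M' |x - e|`, where `∫ √(c² - x²) |x - e| dx = π c³ / 2` because `x √(c² - x²)` is odd.
Since `V ≥ 0`, both `√a` and `c √(1 + V e) / √2 = c^{3/4} |m^±|^{1/4} / √2` are at least `c / √2`,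
so the bound `M' c³ / 2` on the difference of squares becomes `M' c² / (2√2)` on the difference
itself.
-/

open Real Set intervalIntegral

theorem intervalIntegral_eq_zero_of_odd {E : Type*} [NormedAddCommGroup E] [NormedSpace ℝ E]
    {f : ℝ → E} (hf : ∀ x, f (-x) = -f x) (c : ℝ) : ∫ x in (-c)..c, f x = 0 := by
  have h := integral_comp_neg (a := -c) (b := c) f
  simp only [neg_neg, hf, integral_neg] at h
  have h2 : (2 : ℝ) • ∫ x in (-c)..c, f x = 0 := by
    rw [two_smul]; nth_rewrite 1 [← h]; exact neg_add_cancel _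
  exact (smul_eq_zero.mp h2).resolve_left two_ne_zero

section Semicircle

variable {c : ℝ}

theorem integral_sqrt_sq_sub_sq (hc : 0 < c) :
    ∫ x in (-c)..c, √(c ^ 2 - x ^ 2) = π * c ^ 2 / 2 := by
  have h : ∀ x : ℝ, √(c ^ 2 - x ^ 2) = c * √(1 - (x / c) ^ 2) := by
    intro x
    rw [← sqrt_sq hc.le, ← sqrt_mul (sq_nonneg c)]
    congr 1
    field_simp
    rw [sq_sqrt (sq_nonneg c)]
  simp_rw [h]
  rw [integral_const_mul, integral_comp_div (fun y => √(1 - y ^ 2)) hc.ne', neg_div,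
    div_self hc.ne', integral_sqrt_one_sub_sq]
  simp only [smul_eq_mul]
  ring

theorem integral_sqrt_sq_sub_sq_mul_linear (hc : 0 < c) (p q : ℝ) :
    ∫ x in (-c)..c, √(c ^ 2 - x ^ 2) * (p + q * x) = p * (π * c ^ 2 / 2) := by
  have hodd : ∫ x in (-c)..c, x * √(c ^ 2 - x ^ 2) = 0 :=
    intervalIntegral_eq_zero_of_odd (fun x => by rw [neg_sq, neg_mul]) c
  have hsplit : (fun x => √(c ^ 2 - x ^ 2) * (p + q * x))
      = fun x => p * √(c ^ 2 - x ^ 2) + q * (x * √(c ^ 2 - x ^ 2)) := by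
    funext x; ring
  rw [hsplit, integral_add (by apply Continuous.intervalIntegrable; fun_prop)
      (by apply Continuous.intervalIntegrable; fun_prop),
    integral_const_mul, integral_const_mul, integral_sqrt_sq_sub_sq hc, hodd, mul_zero, add_zero]

theorem abs_integral_sqrt_sq_sub_sq_mul_le (hc : 0 < c) {f : ℝ → ℝ} {K s : ℝ}
    (hf : ∀ x ∈ Icc (-c) c, |f x| ≤ K * (c - s * x)) :
    |∫ x in (-c)..c, √(c ^ 2 - x ^ 2) * f x| ≤ K * (π * c ^ 3 / 2) := by
  have hcc : -c ≤ c := by linarith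
  have hle := norm_integral_le_of_norm_le hcc (μ := MeasureTheory.volume)
    (f := fun x => √(c ^ 2 - x ^ 2) * f x)
    (g := fun x => √(c ^ 2 - x ^ 2) * (K * c + -(K * s) * x))
    (Filter.Eventually.of_forall fun x hx => by
      rw [norm_mul, norm_of_nonneg (sqrt_nonneg _), norm_eq_abs]
      have := hf x (Ioc_subset_Icc_self hx)
      gcongr
      linarith)
    (by apply Continuous.intervalIntegrable; fun_prop)
  rw [integral_sqrt_sq_sub_sq_mul_linear hc] at hle
  rw [← norm_eq_abs]
  linarith

end Semicircle

noncomputable def semicircleMoment (c : ℝ) (V : ℝ → ℝ) : ℝ :=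
  (1 / π) * ∫ x in (-c)..c, √(c ^ 2 - x ^ 2) * (1 + V x)

section SemicircleMoment

variable {c : ℝ} {V : ℝ → ℝ}

theorem abs_semicircleMoment_sub_le (hc : 0 < c) (hV : ContinuousOn V (Icc (-c) c)) {W K s : ℝ}
    (hbound : ∀ x ∈ Icc (-c) c, |V x - W| ≤ K * (c - s * x)) :
    |semicircleMoment c V - (1 + W) * c ^ 2 / 2| ≤ K * c ^ 3 / 2 := by
  have hJ : IntervalIntegrable (fun x => √(c ^ 2 - x ^ 2) * (V x - W)) MeasureTheory.volume (-c) c := by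
    apply ContinuousOn.intervalIntegrable
    rw [uIcc_of_le (by linarith)]
    exact (Continuous.continuousOn (by fun_prop)).mul (hV.sub continuousOn_const)
  have hsplit : (fun x => √(c ^ 2 - x ^ 2) * (1 + V x))
      = fun x => √(c ^ 2 - x ^ 2) * ((1 + W) + 0 * x) + √(c ^ 2 - x ^ 2) * (V x - W) := by
    funext x; ring
  have hdiff : semicircleMoment c V - (1 + W) * c ^ 2 / 2
      = (1 / π) * ∫ x in (-c)..c, √(c ^ 2 - x ^ 2) * (V x - W) := by
    rw [semicircleMoment, hsplit, integral_add (by apply Continuous.intervalIntegrable; fun_prop) hJ,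
      integral_sqrt_sq_sub_sq_mul_linear hc]
    field_simp
    ring
  rw [hdiff, abs_mul, abs_of_pos (by positivity)]
  calc 1 / π * |∫ x in (-c)..c, √(c ^ 2 - x ^ 2) * (V x - W)|
      ≤ 1 / π * (K * (π * c ^ 3 / 2)) := by
        gcongr
        exact abs_integral_sqrt_sq_sub_sq_mul_le hc hbound
    _ = K * c ^ 3 / 2 := by field_simp

theorem half_sq_le_semicircleMoment (hc : 0 < c) (hV : ContinuousOn V (Icc (-c) c))
    (hVnn : ∀ x ∈ Icc (-c) c, 0 ≤ V x) : c ^ 2 / 2 ≤ semicircleMoment c V := by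
  have hmono : ∫ x in (-c)..c, √(c ^ 2 - x ^ 2) ≤ ∫ x in (-c)..c, √(c ^ 2 - x ^ 2) * (1 + V x) := by
    apply integral_mono_on (by linarith) (by apply Continuous.intervalIntegrable; fun_prop)
    · apply ContinuousOn.intervalIntegrable
      rw [uIcc_of_le (by linarith)]
      exact (Continuous.continuousOn (by fun_prop)).mul (continuousOn_const.add hV)
    · exact fun x hx => le_mul_of_one_le_right (sqrt_nonneg _) (by linarith [hVnn x hx])
  rw [integral_sqrt_sq_sub_sq hc] at hmono
  rw [semicircleMoment]
  calc c ^ 2 / 2 = 1 / π * (π * c ^ 2 / 2) := by field_simp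
    _ ≤ _ := by gcongr

end SemicircleMoment

theorem abs_sqrt_sub_le_of_le {a u m : ℝ} (hm : 0 < m) (ha : m ≤ √a) (hu : m ≤ u) :
    |√a - u| ≤ |a - u ^ 2| / (2 * m) := by
  have ha0 : 0 ≤ a := (sqrt_pos.mp (hm.trans_le ha)).le
  have hfac : a - u ^ 2 = (√a - u) * (√a + u) := by linear_combination (sq_sqrt ha0).symm
  rw [le_div_iff₀ (by positivity), hfac, abs_mul, abs_of_pos (by linarith : 0 < √a + u)]
  gcongr
  linarith

theorem abs_sqrt_semicircleMoment_sub_le {c : ℝ} {V : ℝ → ℝ} (hc : 0 < c)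
    (hV : ContinuousOn V (Icc (-c) c)) (hVnn : ∀ x ∈ Icc (-c) c, 0 ≤ V x) {W K s : ℝ}
    (hW : 0 ≤ W) (hbound : ∀ x ∈ Icc (-c) c, |V x - W| ≤ K * (c - s * x)) :
    |√(semicircleMoment c V) - c / √2 * √(1 + W)| ≤ c ^ 2 / (2 * √2) * K := by
  have hs2 : √2 ^ 2 = 2 := sq_sqrt (by norm_num)
  have hm : √(c ^ 2 / 2) = c / √2 := by
    rw [sqrt_div' _ zero_le_two, sqrt_sq hc.le]
  have hsa : c / √2 ≤ √(semicircleMoment c V) :=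
    hm ▸ sqrt_le_sqrt (half_sq_le_semicircleMoment hc hV hVnn)
  have hu : c / √2 ≤ c / √2 * √(1 + W) :=
    le_mul_of_one_le_right (by positivity) (one_le_sqrt.mpr (by linarith))
  have hu2 : (c / √2 * √(1 + W)) ^ 2 = (1 + W) * c ^ 2 / 2 := by
    rw [mul_pow, div_pow, hs2, sq_sqrt (by linarith : (0 : ℝ) ≤ 1 + W)]
    ring
  calc _ ≤ |semicircleMoment c V - (c / √2 * √(1 + W)) ^ 2| / (2 * (c / √2)) :=
        abs_sqrt_sub_le_of_le (by positivity) hsa hu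
    _ ≤ K * c ^ 3 / 2 / (2 * (c / √2)) := by
        rw [hu2]
        gcongr
        exact abs_semicircleMoment_sub_le hc hV hbound
    _ = c ^ 2 / (2 * √2) * K := by
        field_simp
        rw [hs2]

theorem rpow_three_quarters_mul_rpow_quarter {c t : ℝ} (hc : 0 ≤ c) (ht : 0 ≤ t) :
    c ^ ((3 : ℝ) / 4) * (c * t ^ 2) ^ ((1 : ℝ) / 4) = c * √t := by
  rw [mul_rpow hc (sq_nonneg _), ← mul_assoc, ← rpow_add' hc (by norm_num),
    ← rpow_natCast t 2, ← rpow_mul ht, sqrt_eq_rpow]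
  norm_num

theorem stmt_11_general
    (c : ℝ) (hc : 0 < c)
    (V V' V'' : ℝ → ℝ)
    (hV1 : ∀ x ∈ Set.Icc (-c) c, HasDerivAt V (V' x) x)
    (hVnn : ∀ x ∈ Set.Icc (-c) c, 0 ≤ V x)
    (r v : ℝ → ℝ)
    (hr : ∀ x, r x = Real.sqrt (c ^ 2 - x ^ 2))
    (hv : ∀ x, v x = r x * (1 + V x))
    (M' M'' : ℝ)
    (hM' : IsLUB ((fun x => |V' x|) '' Set.Icc (-c) c) M')
    (hM'' : IsLUB ((fun x => |V'' x|) '' Set.Icc (-c) c) M'')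
    (a : ℝ) (ha : a = (1 / Real.pi) * ∫ x in (-c)..c, v x)
    (mp mm : ℝ)
    (hmp : mp = c * (1 + V c) ^ 2)
    (hmm : mm = -(c * (1 + V (-c)) ^ 2))
    :
    |Real.sqrt a - c ^ ((3 : ℝ) / 4) / Real.sqrt 2 * |mp| ^ ((1 : ℝ) / 4)| ≤ c ^ 2 / (2 * Real.sqrt 2) * (M' + c / 4 * M'') ∧
    |Real.sqrt a - c ^ ((3 : ℝ) / 4) / Real.sqrt 2 * |mm| ^ ((1 : ℝ) / 4)| ≤ c ^ 2 / (2 * Real.sqrt 2) * (M' + c / 4 * M'') := by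
  have hcc : -c ≤ c := by linarith
  have hVc : ContinuousOn V (Icc (-c) c) := fun x hx => (hV1 x hx).continuousAt.continuousWithinAt
  have ha' : a = semicircleMoment c V := by simp only [ha, semicircleMoment, hv, hr]
  have hlip : ∀ x ∈ Icc (-c) c, ∀ y ∈ Icc (-c) c, |V y - V x| ≤ M' * |y - x| := fun x hx y hy => by
    simpa only [norm_eq_abs] using (convex_Icc (-c) c).norm_image_sub_le_of_norm_hasDerivWithin_le
      (fun z hz => (hV1 z hz).hasDerivWithinAt) (fun z hz => hM'.1 ⟨z, hz, rfl⟩) hx hy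
  have hslack : c ^ 2 / (2 * √2) * M' ≤ c ^ 2 / (2 * √2) * (M' + c / 4 * M'') := by
    have : 0 ≤ M'' := (abs_nonneg _).trans (hM''.1 ⟨c, ⟨hcc, le_rfl⟩, rfl⟩)
    gcongr
    exact le_add_of_nonneg_right (by positivity)
  have hend : ∀ e ∈ Icc (-c) c, ∀ s : ℝ, (∀ x ∈ Icc (-c) c, |x - e| = c - s * x) →
      |√a - c ^ ((3 : ℝ) / 4) / √2 * (c * (1 + V e) ^ 2) ^ ((1 : ℝ) / 4)|
        ≤ c ^ 2 / (2 * √2) * (M' + c / 4 * M'') := by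
    intro e he s hs
    rw [div_mul_eq_mul_div, rpow_three_quarters_mul_rpow_quarter hc.le (by linarith [hVnn e he]),
      mul_div_right_comm, ha']
    refine (abs_sqrt_semicircleMoment_sub_le (s := s) hc hVc hVnn (hVnn e he) fun x hx => ?_).trans hslack
    rw [← hs x hx]
    exact hlip e he x hx
  constructor
  · rw [hmp, abs_of_nonneg (by positivity : 0 ≤ c * (1 + V c) ^ 2)]
    exact hend c ⟨hcc, le_rfl⟩ 1 fun x hx => by rw [abs_of_nonpos (by linarith [hx.2])]; ring
  · rw [hmm, abs_neg, abs_of_nonneg (by positivity : 0 ≤ c * (1 + V (-c)) ^ 2)]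
    exact hend (-c) ⟨le_rfl, hcc⟩ (-1) fun x hx => by rw [abs_of_nonneg (by linarith [hx.1])]; ring

theorem stmt_11
    (c : ℝ) (hc : 0 < c)
    (V V' V'' : ℝ → ℝ)
    (hV1 : ∀ x ∈ Set.Icc (-c) c, HasDerivAt V (V' x) x)
    (hV2 : ∀ x ∈ Set.Icc (-c) c, HasDerivAt V' (V'' x) x)
    (hV2c : ContinuousOn V'' (Set.Icc (-c) c))
    (hVnn : ∀ x ∈ Set.Icc (-c) c, 0 ≤ V x)
    (r v : ℝ → ℝ)
    (hr : ∀ x, r x = Real.sqrt (c ^ 2 - x ^ 2))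
    (hv : ∀ x, v x = r x * (1 + V x))
    (M M' M'' : ℝ)
    (hM : IsLUB (V '' Set.Icc (-c) c) M)
    (hM' : IsLUB ((fun x => |V' x|) '' Set.Icc (-c) c) M')
    (hM'' : IsLUB ((fun x => |V'' x|) '' Set.Icc (-c) c) M'')
    (a : ℝ) (ha : a = (1 / Real.pi) * ∫ x in (-c)..c, v x)
    (mp mm : ℝ)
    (hmp : mp = c * (1 + V c) ^ 2)
    (hmm : mm = -(c * (1 + V (-c)) ^ 2))
    :
    |Real.sqrt a - c ^ ((3 : ℝ) / 4) / Real.sqrt 2 * |mp| ^ ((1 : ℝ) / 4)| ≤ c ^ 2 / (2 * Real.sqrt 2) * (M' + c / 4 * M'') ∧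
    |Real.sqrt a - c ^ ((3 : ℝ) / 4) / Real.sqrt 2 * |mm| ^ ((1 : ℝ) / 4)| ≤ c ^ 2 / (2 * Real.sqrt 2) * (M' + c / 4 * M'') :=
  stmt_11_general c hc V V' V'' hV1 hVnn r v hr hv M' M'' hM' hM'' a ha mp mm hmp hmm
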